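/- arXiv:2008.09449 — 2 statements merged into one kernel-verified Lean document; each statement's English description precedes it below -/
import Mathlib

section
/- For every n ∈ ℕ, the group of order-preserving group automorphisms of ℚ^n_lex is isomorphic to the group of n×n upper triangular rational matrices with positive diagonal entries. -/
/-- `Fin n → R` with the lexicographic order in which the **last** coordinate is the most
significant: `x < y` iff `x ≠ y` and `x i < y i` at the largest index `i` where `x` and `y`
differ. -/
def LexPow (R : Type*) (n : ℕ) : Type _ := Fin n → R

namespace LexPow

variable {R : Type*} {n : ℕ}

/-- The identity bijection between `Fin n → R` and `LexPow R n`. -/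
def of : (Fin n → R) ≃ LexPow R n := Equiv.refl _

instance : CoeFun (LexPow R n) (fun _ => Fin n → R) := ⟨fun x => x⟩

instance [AddCommGroup R] : AddCommGroup (LexPow R n) :=
  inferInstanceAs (AddCommGroup (Fin n → R))

/-- The map reversing coordinates, into the Mathlib lexicographic order (in which the *first*
coordinate is most significant). -/
def toRevLex (x : LexPow R n) : Lex (Fin n → R) :=
  toLex (fun i : Fin n => of.symm x (Fin.rev i))

theorem toRevLex_injective : Function.Injective (toRevLex (R := R) (n := n)) := by
  intro a b hab
  refine of.symm.injective (funext fun i => ?_)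
  have h := congrFun (congrArg ofLex hab) (Fin.rev i)
  simpa [toRevLex, Fin.rev_rev] using h

noncomputable instance [AddCommGroup R] [LinearOrder R] [IsOrderedAddMonoid R] :
    LinearOrder (LexPow R n) :=
  LinearOrder.lift' (toRevLex (R := R) (n := n)) toRevLex_injective

instance [AddCommGroup R] [LinearOrder R] [IsOrderedAddMonoid R] :
    IsOrderedAddMonoid (LexPow R n) where
  add_le_add_left := fun a b hab c => by
    show toRevLex (a + c) ≤ toRevLex (b + c)
    have h : toRevLex a ≤ toRevLex b := hab
    exact add_le_add_left h (toRevLex c)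

end LexPow

section Matrices

variable {R : Type*} {n : ℕ}

theorem diag_mul_of_triangular [CommRing R] {A B : Matrix (Fin n) (Fin n) R}
    (hA : A.BlockTriangular id) (hB : B.BlockTriangular id) (i : Fin n) :
    (A * B) i i = A i i * B i i := by
  rw [Matrix.mul_apply]
  apply Finset.sum_eq_single i
  · intro k _ hk
    rcases lt_or_gt_of_ne hk with h | h
    · rw [hA (show (id : Fin n → Fin n) k < id i from h), zero_mul]
    · rw [hB (show (id : Fin n → Fin n) i < id k from h), mul_zero]
  · intro h; exact absurd (Finset.mem_univ i) h

/-- The group `UT(n,R)` of upper triangular `n × n` matrices over `R` with all diagonal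
entries equal to `1`, realised as a subgroup of the group of units of the matrix ring. -/
def UT (n : ℕ) (R : Type*) [CommRing R] : Subgroup (Matrix (Fin n) (Fin n) R)ˣ where
  carrier := {A | (∀ i j : Fin n, j < i → (A : Matrix (Fin n) (Fin n) R) i j = 0) ∧
    ∀ i : Fin n, (A : Matrix (Fin n) (Fin n) R) i i = 1}
  one_mem' := by
    refine ⟨fun i j hij => ?_, fun i => ?_⟩
    · simp [Matrix.one_apply, (ne_of_lt hij).symm]
    · simp
  mul_mem' := by
    rintro A B ⟨hA1, hA2⟩ ⟨hB1, hB2⟩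
    have hA : (A : Matrix (Fin n) (Fin n) R).BlockTriangular id := fun i j h => hA1 i j h
    have hB : (B : Matrix (Fin n) (Fin n) R).BlockTriangular id := fun i j h => hB1 i j h
    refine ⟨fun i j hij => ?_, fun i => ?_⟩
    · exact (hA.mul hB) (show (id : Fin n → Fin n) j < id i from hij)
    · rw [Units.val_mul, diag_mul_of_triangular hA hB, hA2, hB2, one_mul]
  inv_mem' := by
    rintro A ⟨hA1, hA2⟩
    have hA : (A : Matrix (Fin n) (Fin n) R).BlockTriangular id := fun i j h => hA1 i j h
    haveI := A.invertible
    have hAinv : ((A : Matrix (Fin n) (Fin n) R)⁻¹).BlockTriangular id :=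
      Matrix.blockTriangular_inv_of_blockTriangular hA
    have hcoe : ((A⁻¹ : (Matrix (Fin n) (Fin n) R)ˣ) : Matrix (Fin n) (Fin n) R)
        = (A : Matrix (Fin n) (Fin n) R)⁻¹ := Matrix.coe_units_inv A
    refine ⟨fun i j hij => ?_, fun i => ?_⟩
    · rw [hcoe]; exact hAinv (show (id : Fin n → Fin n) j < id i from hij)
    · have h1 : ((A : Matrix (Fin n) (Fin n) R) * (A : Matrix (Fin n) (Fin n) R)⁻¹) i i = 1 := by
        rw [Matrix.mul_inv_of_invertible]; simp
      rw [diag_mul_of_triangular hA hAinv, hA2, one_mul] at h1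
      rw [hcoe, h1]

/-- The group `T*(n,R)` of upper triangular `n × n` matrices over a linearly ordered field `R`
with positive diagonal entries, realised as a subgroup of the units of the matrix ring. -/
def Tstar (n : ℕ) (R : Type*) [Field R] [LinearOrder R] [IsStrictOrderedRing R] : Subgroup (Matrix (Fin n) (Fin n) R)ˣ where
  carrier := {A | (∀ i j : Fin n, j < i → (A : Matrix (Fin n) (Fin n) R) i j = 0) ∧
    ∀ i : Fin n, 0 < (A : Matrix (Fin n) (Fin n) R) i i}
  one_mem' := by
    refine ⟨fun i j hij => ?_, fun i => ?_⟩
    · simp [Matrix.one_apply, (ne_of_lt hij).symm]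
    · simp
  mul_mem' := by
    rintro A B ⟨hA1, hA2⟩ ⟨hB1, hB2⟩
    have hA : (A : Matrix (Fin n) (Fin n) R).BlockTriangular id := fun i j h => hA1 i j h
    have hB : (B : Matrix (Fin n) (Fin n) R).BlockTriangular id := fun i j h => hB1 i j h
    refine ⟨fun i j hij => ?_, fun i => ?_⟩
    · exact (hA.mul hB) (show (id : Fin n → Fin n) j < id i from hij)
    · rw [Units.val_mul, diag_mul_of_triangular hA hB]
      exact mul_pos (hA2 i) (hB2 i)
  inv_mem' := by
    rintro A ⟨hA1, hA2⟩
    have hA : (A : Matrix (Fin n) (Fin n) R).BlockTriangular id := fun i j h => hA1 i j h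
    haveI := A.invertible
    have hAinv : ((A : Matrix (Fin n) (Fin n) R)⁻¹).BlockTriangular id :=
      Matrix.blockTriangular_inv_of_blockTriangular hA
    have hcoe : ((A⁻¹ : (Matrix (Fin n) (Fin n) R)ˣ) : Matrix (Fin n) (Fin n) R)
        = (A : Matrix (Fin n) (Fin n) R)⁻¹ := Matrix.coe_units_inv A
    refine ⟨fun i j hij => ?_, fun i => ?_⟩
    · rw [hcoe]; exact hAinv (show (id : Fin n → Fin n) j < id i from hij)
    · have h1 : ((A : Matrix (Fin n) (Fin n) R) * (A : Matrix (Fin n) (Fin n) R)⁻¹) i i = 1 := by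
        rw [Matrix.mul_inv_of_invertible]; simp
      rw [diag_mul_of_triangular hA hAinv] at h1
      rw [hcoe]
      rcases lt_trichotomy ((A : Matrix (Fin n) (Fin n) R)⁻¹ i i) 0 with h | h | h
      · exact absurd h1 (by nlinarith [hA2 i])
      · rw [h, mul_zero] at h1; exact absurd h1 zero_ne_one
      · exact h

/-- The last index of `Fin N` (any element of `Fin N` witnesses `0 < N`). -/
def lastOf {N : ℕ} (r : Fin N) : Fin N := ⟨N - 1, Nat.sub_lt r.pos Nat.one_pos⟩

/-- A square matrix `g` (upper triangular, with positive diagonal and bottom-right entry `1`)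
is *essentially hyperbolic* if `g ≠ 1` and there is a row index `r` which is not the last row
such that `(g-1)_{r,N} ≠ 0` (where `N` is the last column) and every nonzero entry of `g - 1`
lies either in a row strictly above `r`, or at position `(r, N)`. -/
def EssentiallyHyperbolic {N : ℕ} {R : Type*} [CommRing R]
    (g : Matrix (Fin N) (Fin N) R) : Prop :=
  g ≠ 1 ∧ ∃ r : Fin N, (r : ℕ) + 1 < N ∧ (g - 1) r (lastOf r) ≠ 0 ∧
    ∀ i j : Fin N, (g - 1) i j ≠ 0 → i < r ∨ (i = r ∧ j = lastOf r)

end Matrices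

/-- The group of order-preserving additive automorphisms of a linearly ordered abelian
group `Λ`, as a subgroup of `AddAut Λ`. -/
def orderAddAut (Λ : Type*) [AddCommGroup Λ] [LinearOrder Λ] [IsOrderedAddMonoid Λ] : Subgroup (Multiplicative (AddAut Λ)) where
  carrier := {f | StrictMono ((Multiplicative.toAdd f : AddAut Λ) : Λ → Λ)}
  one_mem' := strictMono_id
  mul_mem' := by
    intro f g hf hg a b hab
    exact hf (hg hab)
  inv_mem' := by
    intro f hf a b hab
    exact hf.lt_iff_lt.1 (by simpa using hab)

/-!
An additive automorphism of `ℚ^n` is `ℚ`-linear, so it is `x ↦ A x` for an invertible matrix `A`,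
and the point is that `x ↦ A x` preserves the order of `ℚ^n_lex` exactly when `A` is upper
triangular with positive diagonal. Such a matrix keeps the leading (highest nonzero) coordinate of
a vector in place and multiplies it by a positive number, so it maps positive vectors to positive
vectors. Conversely, if `x ↦ A x` is strictly monotone, the image of the basis vector `e j` is
positive, with leading index `k j` say. For `j < j'` every multiple of `e j` lies below `e j'`,
which by the Archimedean property of `ℚ` forbids `k j' ≤ k j`. So `k` is strictly increasing,
hence the identity of `Fin n`: column `j` of `A` vanishes below the diagonal and `A j j > 0`.
-/

open Matrix

theorem Matrix.BlockTriangular.mulVec_apply_of_forall_lt {ι R : Type*} [Fintype ι] [LinearOrder ι]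
    [NonUnitalNonAssocSemiring R] {A : Matrix ι ι R} (hA : A.BlockTriangular id) {x : ι → R}
    {t : ι} (hx : ∀ j, t < j → x j = 0) : (A *ᵥ x) t = A t t * x t := by
  rw [mulVec, dotProduct]
  refine Finset.sum_eq_single t (fun s _ hs => ?_) (by simp)
  rcases hs.lt_or_gt with h | h
  · rw [hA h, zero_mul]
  · rw [hx s h, mul_zero]

def AddAut.ratLinearEquiv (V : Type*) [AddCommGroup V] [Module ℚ V] :
    Multiplicative (AddAut V) ≃* (V ≃ₗ[ℚ] V) where
  toFun f := (Multiplicative.toAdd f).toLinearEquiv (map_rat_smul (Multiplicative.toAdd f))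
  invFun e := Multiplicative.ofAdd e.toAddEquiv
  left_inv _ := rfl
  right_inv _ := rfl
  map_mul' _ _ := rfl

namespace LexPow

variable {R : Type*} {n : ℕ}

@[simp]
theorem of_apply (x : Fin n → R) (i : Fin n) : of x i = x i := rfl

@[simp]
theorem nsmul_apply [AddCommGroup R] (m : ℕ) (x : LexPow R n) (i : Fin n) : (m • x) i = m • x i :=
  rfl

section OrderedGroup

variable [AddCommGroup R] [LinearOrder R] [IsOrderedAddMonoid R]

theorem lt_iff {x y : LexPow R n} :
    x < y ↔ ∃ k : Fin n, (∀ j, k < j → x j = y j) ∧ x k < y k := by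
  change Pi.Lex (· < ·) (· < ·) (fun i => x (Fin.rev i)) (fun i => y (Fin.rev i)) ↔ _
  constructor
  · rintro ⟨i, hgt, hlt⟩
    refine ⟨Fin.rev i, fun j hj => ?_, hlt⟩
    simpa using hgt (Fin.rev j) (Fin.rev_lt_iff.1 hj)
  · rintro ⟨k, hgt, hlt⟩
    refine ⟨Fin.rev k, fun j hj => hgt (Fin.rev j) (Fin.lt_rev_iff.1 hj), by simpa using hlt⟩

theorem pos_iff {x : LexPow R n} : 0 < x ↔ ∃ k : Fin n, (∀ j, k < j → x j = 0) ∧ 0 < x k := by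
  simp only [lt_iff, eq_comm (b := (0 : R))]
  rfl

theorem single_pos {j : Fin n} {a : R} (ha : 0 < a) : 0 < of (Pi.single j a) :=
  pos_iff.2 ⟨j, fun _ hi => by simp [hi.ne'], by simpa using ha⟩

theorem nsmul_single_lt_single {j j' : Fin n} (hj : j < j') (a : R) {b : R} (hb : 0 < b) (m : ℕ) :
    m • of (Pi.single j a) < of (Pi.single j' b) := by
  refine lt_iff.2 ⟨j', fun i hi => ?_, ?_⟩
  · simp [(hj.trans hi).ne', hi.ne']
  · simpa [hj.ne'] using hb

theorem exists_lt_nsmul [Archimedean R] {x y : LexPow R n} {k : Fin n} (hxk : 0 < x k)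
    (hx : ∀ j, k < j → x j = 0) (hy : ∀ j, k < j → y j = 0) : ∃ m : ℕ, y < m • x := by
  obtain ⟨m, hm⟩ := Archimedean.arch (y k) hxk
  refine ⟨m + 1, lt_iff.2 ⟨k, fun j hj => ?_, ?_⟩⟩
  · rw [nsmul_apply, hx j hj, hy j hj, smul_zero]
  · rw [nsmul_apply, succ_nsmul]
    exact hm.trans_lt (lt_add_of_pos_right _ hxk)

theorem apply_single_of_strictMono [Archimedean R] {f : LexPow R n →+ LexPow R n}
    (hf : StrictMono f) {a : R} (ha : 0 < a) (j : Fin n) :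
    (∀ i, j < i → f (of (Pi.single j a)) i = 0) ∧ 0 < f (of (Pi.single j a)) j := by
  have hpos : ∀ j, 0 < f (of (Pi.single j a)) := fun j => map_zero f ▸ hf (single_pos ha)
  choose k hk0 hkpos using fun j => pos_iff.1 (hpos j)
  have hk : StrictMono k := by
    intro j j' hj
    by_contra! hle
    obtain ⟨m, hm⟩ := exists_lt_nsmul (hkpos j) (hk0 j) fun i hi => hk0 j' i (hle.trans_lt hi)
    have hlt := hf (nsmul_single_lt_single hj a ha m)
    rw [map_nsmul] at hlt
    exact (hm.trans hlt).false
  have hkj : k j = j := congrFun hk.eq_id j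
  simpa only [hkj] using And.intro (hk0 j) (hkpos j)

end OrderedGroup

section OrderedRing

variable {K : Type*} [Ring K]

def mulVecHom (A : Matrix (Fin n) (Fin n) K) : LexPow K n →+ LexPow K n where
  toFun x := of (A *ᵥ of.symm x)
  map_zero' := A.mulVec_zero
  map_add' _ _ := A.mulVec_add _ _

@[simp]
theorem mulVecHom_apply (A : Matrix (Fin n) (Fin n) K) (x : LexPow K n) (i : Fin n) :
    mulVecHom A x i = (A *ᵥ of.symm x) i :=
  rfl

variable [LinearOrder K] [IsStrictOrderedRing K] {A : Matrix (Fin n) (Fin n) K}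

theorem strictMono_mulVecHom (hA : A.BlockTriangular id) (hdiag : ∀ i, 0 < A i i) :
    StrictMono (mulVecHom A) := by
  refine (strictMono_iff_map_pos _).2 fun x hx => ?_
  obtain ⟨k, hvanish, hlead⟩ := pos_iff.1 hx
  refine pos_iff.2 ⟨k, fun t ht => ?_, ?_⟩
  · rw [mulVecHom_apply,
      hA.mulVec_apply_of_forall_lt (x := of.symm x) fun j hj => hvanish j (ht.trans hj)]
    exact mul_eq_zero_of_right _ (hvanish t ht)
  · rw [mulVecHom_apply, hA.mulVec_apply_of_forall_lt (x := of.symm x) hvanish]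
    exact mul_pos (hdiag k) hlead

theorem blockTriangular_of_strictMono_mulVecHom [Archimedean K] (hA : StrictMono (mulVecHom A)) :
    A.BlockTriangular id ∧ ∀ i, 0 < A i i := by
  have hcol : ∀ i j, mulVecHom A (of (Pi.single j 1)) i = A i j := fun i j => by simp
  refine ⟨fun i j hij => ?_, fun i => ?_⟩
  · simpa only [hcol] using (apply_single_of_strictMono hA one_pos j).1 i hij
  · simpa only [hcol] using (apply_single_of_strictMono hA one_pos i).2

theorem strictMono_mulVecHom_iff [Archimedean K] :
    StrictMono (mulVecHom A) ↔ A.BlockTriangular id ∧ ∀ i, 0 < A i i :=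
  ⟨blockTriangular_of_strictMono_mulVecHom, fun h => strictMono_mulVecHom h.1 h.2⟩

end OrderedRing

-- `LexPow ℚ n` is `Fin n → ℚ` as an additive group, so its automorphisms are those of `Fin n → ℚ`.
noncomputable def addAutEquivGL (n : ℕ) : Multiplicative (AddAut (LexPow ℚ n)) ≃* GL (Fin n) ℚ :=
  (AddAut.ratLinearEquiv (Fin n → ℚ)).trans <|
    (LinearMap.GeneralLinearGroup.generalLinearEquiv ℚ _).symm.trans
      Matrix.GeneralLinearGroup.toLin.symm

theorem coe_addAutEquivGL_symm (A : GL (Fin n) ℚ) :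
    ⇑(Multiplicative.toAdd ((addAutEquivGL n).symm A)) = mulVecHom (A : Matrix (Fin n) (Fin n) ℚ) :=
  rfl

end LexPow

/-- The group of order-preserving group automorphisms of `ℚ^n_lex` is
isomorphic to the group of `n × n` upper triangular rational matrices with positive
diagonal entries. -/
theorem orderAddAut_lexPow_rat_mulEquiv_Tstar (n : ℕ) :
    Nonempty (orderAddAut (LexPow ℚ n) ≃* Tstar n ℚ) := by
  have hmap : (orderAddAut (LexPow ℚ n)).map (LexPow.addAutEquivGL n) = Tstar n ℚ := by
    rw [Subgroup.map_equiv_eq_comap_symm]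
    ext A
    change StrictMono ⇑(Multiplicative.toAdd ((LexPow.addAutEquivGL n).symm A)) ↔ _
    rw [LexPow.coe_addAutEquivGL_symm]
    exact LexPow.strictMono_mulVecHom_iff
  exact ⟨((LexPow.addAutEquivGL n).subgroupMap _).trans (MulEquiv.subgroupCongr hmap)⟩
end

section
/- Let F be a free group and d ∈ ℕ. The free soluble group F / F^{(d)}, the quotient of F by the d-th term of its derived series, admits an essentially free orientation-preserving affine action on some linearly ordered abelian group. -/
/-- The bundled class of linearly ordered additive commutative groups (removed from Mathlib). -/
class LinearOrderedAddCommGroup (α : Type*) extends AddCommGroup α, LinearOrder α,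
    IsOrderedAddMonoid α

/-- An orientation-preserving affine automorphism of a linearly ordered abelian group `Λ`:
an order-preserving bijection `g` of `Λ` admitting an order-preserving group automorphism
`dilation` (the dilation factor) with `g x - g y = dilation (x - y)` for all `x, y`. -/
structure OPAffineAut (Λ : Type*) [LinearOrderedAddCommGroup Λ] extends Λ ≃ Λ where
  strictMono' : StrictMono toEquiv
  dilation : Λ ≃+ Λ
  dilation_strictMono : StrictMono dilation
  affine : ∀ x y : Λ, toEquiv x - toEquiv y = dilation (x - y)

namespace OPAffineAut

variable {Λ : Type*} [LinearOrderedAddCommGroup Λ]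

instance : CoeFun (OPAffineAut Λ) (fun _ => Λ → Λ) := ⟨fun f => f.toEquiv⟩

theorem ext' {f g : OPAffineAut Λ} (h : ∀ x, f x = g x) : f = g := by
  have he : f.toEquiv = g.toEquiv := Equiv.ext h
  have hd : f.dilation = g.dilation := AddEquiv.ext fun x => by
    have hf := f.affine x 0
    have hg := g.affine x 0
    rw [sub_zero] at hf hg
    rw [← hf, ← hg]
    show f x - f 0 = g x - g 0
    rw [h x, h 0]
  cases f; cases g
  cases he; cases hd
  rfl

instance : Group (OPAffineAut Λ) where
  one :=
    { toEquiv := Equiv.refl Λ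
      strictMono' := strictMono_id
      dilation := AddEquiv.refl Λ
      dilation_strictMono := strictMono_id
      affine := fun _ _ => rfl }
  mul f g :=
    { toEquiv := g.toEquiv.trans f.toEquiv
      strictMono' := f.strictMono'.comp g.strictMono'
      dilation := g.dilation.trans f.dilation
      dilation_strictMono := f.dilation_strictMono.comp g.dilation_strictMono
      affine := fun x y => by
        simp only [Equiv.trans_apply, AddEquiv.trans_apply]
        rw [f.affine, g.affine] }
  inv f :=
    { toEquiv := f.toEquiv.symm
      strictMono' := fun a b hab => f.strictMono'.lt_iff_lt.1 (by
        simpa only [Equiv.apply_symm_apply] using hab)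
      dilation := f.dilation.symm
      dilation_strictMono := fun a b hab => f.dilation_strictMono.lt_iff_lt.1 (by
        simpa only [AddEquiv.apply_symm_apply] using hab)
      affine := fun x y => f.dilation.injective (by
        rw [AddEquiv.apply_symm_apply, ← f.affine, Equiv.apply_symm_apply,
          Equiv.apply_symm_apply]) }
  mul_assoc f g h := ext' fun _ => rfl
  one_mul f := ext' fun _ => rfl
  mul_one f := ext' fun _ => rfl
  inv_mul_cancel f := ext' fun x => f.toEquiv.symm_apply_apply x

@[simp] theorem mul_apply (f g : OPAffineAut Λ) (x : Λ) : (f * g) x = f (g x) := rfl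
@[simp] theorem one_apply (x : Λ) : (1 : OPAffineAut Λ) x = x := rfl
@[simp] theorem inv_apply (f : OPAffineAut Λ) (x : Λ) : f⁻¹ x = f.toEquiv.symm x := rfl

/-- An affine automorphism is *hyperbolic* if it has no fixed point. -/
def Hyperbolic (f : OPAffineAut Λ) : Prop := ∀ x : Λ, f x ≠ x

/-- An affine automorphism is *rigid* if for `ε = ±1`, whenever `f^ε` moves some point up,
it moves every point up. -/
def Rigid (f : OPAffineAut Λ) : Prop :=
  ∀ ε : ℤ, ε = 1 ∨ ε = -1 → (∃ x : Λ, x < (f ^ ε) x) → ∀ y : Λ, y < (f ^ ε) y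

end OPAffineAut

/-- An orientation-preserving affine action (a homomorphism into the group of
orientation-preserving affine automorphisms) is *free* if every nontrivial group element
acts without fixed points. -/
def AffineActionFree {G Λ : Type*} [Group G] [LinearOrderedAddCommGroup Λ]
    (ρ : G →* OPAffineAut Λ) : Prop :=
  ∀ g : G, g ≠ 1 → ∀ x : Λ, ρ g x ≠ x

/-- An orientation-preserving affine action is *essentially free* if every nontrivial group
element acts as a rigid hyperbolic affine automorphism. -/
def AffineActionEssentiallyFree {G Λ : Type*} [Group G] [LinearOrderedAddCommGroup Λ]
    (ρ : G →* OPAffineAut Λ) : Prop :=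
  ∀ g : G, g ≠ 1 → (ρ g).Rigid ∧ (ρ g).Hyperbolic

/-- `G` admits an essentially free orientation-preserving affine action on `Λ`. -/
def HasEssentiallyFreeAffineAction (G : Type*) [Group G] (Λ : Type*)
    [LinearOrderedAddCommGroup Λ] : Prop :=
  ∃ ρ : G →* OPAffineAut Λ, AffineActionEssentiallyFree ρ

universe u

instance (G : Type*) [Group G] (d : ℕ) : (derivedSeries G d).Normal :=
  derivedSeries_normal G d

/-!
Induct along the derived series. Suppose `Q = F ⧸ R` acts essentially freely on `Λ`. Comparing
the images of `0` left-orders `Q`, so the left regular action of `Q` on `ℤ[Q]^α`, ordered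
lexicographically, preserves the order. The Magnus embedding lets `F` act on `ℤ[Q]^α` by
`v ↦ π(w) • v + ∂w`, where `∂w` collects the Fox derivatives of `w`. By Magnus' theorem its kernel
within `R` is `⁅R, R⁆`: sending `e_(q, i)` to the Schreier generator `s(q) xᵢ s(q xᵢ)⁻¹` of `R^ab`
retracts `∂w` onto the class of `w`. Now let `F` act on `Λ ×ₗ ℤ[Q]^α` through both actions: an
element outside `R` moves every point in the same direction through the first coordinate, and an
element of `R ∖ ⁅R, R⁆` moves every point by the nonzero translation `∂w` in the second.
-/

instance {γ : Type*} [AddCommGroup γ] [LinearOrder γ] [IsOrderedAddMonoid γ] :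
    LinearOrderedAddCommGroup γ := {}

namespace OPAffineAut

variable {Λ : Type*} [LinearOrderedAddCommGroup Λ]

theorem apply_eq_dilation_add (f : OPAffineAut Λ) (x : Λ) : f x = f.dilation x + f 0 := by
  rw [← sub_eq_iff_eq_add, f.affine, sub_zero]

def dilationPerm : OPAffineAut Λ →* Equiv.Perm Λ where
  toFun f := f.dilation.toEquiv
  map_one' := rfl
  map_mul' _ _ := rfl

@[simp] theorem dilationPerm_apply (f : OPAffineAut Λ) (x : Λ) :
    dilationPerm f x = f.dilation x := rfl

def ofDilation (e : Λ ≃+ Λ) (he : StrictMono e) (c : Λ) : OPAffineAut Λ where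
  toFun x := e x + c
  invFun y := e.symm (y - c)
  left_inv x := by simp
  right_inv y := by simp
  strictMono' _ _ h := add_lt_add_left (he h) c
  dilation := e
  dilation_strictMono := he
  affine x y := by
    change e x + c - (e y + c) = e (x - y)
    rw [add_sub_add_right_eq_sub, map_sub]

@[simp] theorem ofDilation_apply (e : Λ ≃+ Λ) (he : StrictMono e) (c x : Λ) :
    ofDilation e he c x = e x + c := rfl

@[simp] theorem dilation_ofDilation (e : Λ ≃+ Λ) (he : StrictMono e) (c : Λ) :
    (ofDilation e he c).dilation = e := rfl

theorem lt_inv_apply_iff (f : OPAffineAut Λ) (x : Λ) : x < f⁻¹ x ↔ f x < x := by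
  rw [inv_apply, ← f.strictMono'.lt_iff_lt, Equiv.apply_symm_apply]

theorem rigid_and_hyperbolic_iff (f : OPAffineAut Λ) :
    f.Rigid ∧ f.Hyperbolic ↔ (∀ x, x < f x) ∨ (∀ x, f x < x) := by
  constructor
  · rintro ⟨hrigid, hhyp⟩
    rcases (hhyp 0).lt_or_gt with hdown | hup
    · right
      intro x
      have := hrigid (-1) (Or.inr rfl) ⟨0, by rwa [zpow_neg_one, lt_inv_apply_iff]⟩ x
      rwa [zpow_neg_one, lt_inv_apply_iff] at this
    · left
      simpa using hrigid 1 (Or.inl rfl) ⟨0, by simpa using hup⟩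
  · rintro (hup | hdown)
    · refine ⟨?_, fun x => (hup x).ne'⟩
      rintro ε (rfl | rfl) ⟨x, hx⟩ y
      · simpa using hup y
      · rw [zpow_neg_one, lt_inv_apply_iff] at hx
        exact absurd (hup x) hx.not_gt
    · refine ⟨?_, fun x => (hdown x).ne⟩
      rintro ε (rfl | rfl) ⟨x, hx⟩ y
      · rw [zpow_one] at hx
        exact absurd (hdown x) hx.not_gt
      · rw [zpow_neg_one, lt_inv_apply_iff]
        exact hdown y

theorem rigid_and_hyperbolic_of_dilation_eq_id {f : OPAffineAut Λ} (hf : ∀ x, f.dilation x = x)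
    (h0 : f 0 ≠ 0) : f.Rigid ∧ f.Hyperbolic := by
  have hf x : f x = x + f 0 := by rw [apply_eq_dilation_add, hf]
  rw [rigid_and_hyperbolic_iff]
  rcases h0.lt_or_gt with hneg | hpos
  · exact Or.inr fun x => by rw [hf]; exact add_lt_of_neg_right x hneg
  · exact Or.inl fun x => by rw [hf]; exact lt_add_of_pos_right x hpos

variable {Λ₁ Λ₂ : Type*} [LinearOrderedAddCommGroup Λ₁] [LinearOrderedAddCommGroup Λ₂]

def prodLex : OPAffineAut Λ₁ × OPAffineAut Λ₂ →* OPAffineAut (Lex (Λ₁ × Λ₂)) where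
  toFun p :=
    { toEquiv := ofLex.trans ((p.1.toEquiv.prodCongr p.2.toEquiv).trans toLex)
      strictMono' := fun x y hxy => by
        rcases Prod.Lex.toLex_lt_toLex.mp hxy with h | ⟨h, h'⟩
        · exact Prod.Lex.toLex_lt_toLex.mpr (Or.inl (p.1.strictMono' h))
        · exact Prod.Lex.toLex_lt_toLex.mpr (Or.inr ⟨congrArg p.1 h, p.2.strictMono' h'⟩)
      dilation := (toLexAddEquiv _).symm.trans
        ((p.1.dilation.prodCongr p.2.dilation).trans (toLexAddEquiv _))
      dilation_strictMono := fun x y hxy => by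
        rcases Prod.Lex.toLex_lt_toLex.mp hxy with h | ⟨h, h'⟩
        · exact Prod.Lex.toLex_lt_toLex.mpr (Or.inl (p.1.dilation_strictMono h))
        · exact Prod.Lex.toLex_lt_toLex.mpr
            (Or.inr ⟨congrArg p.1.dilation h, p.2.dilation_strictMono h'⟩)
      affine := fun x y => congrArg toLex (Prod.ext (p.1.affine _ _) (p.2.affine _ _)) }
  map_one' := rfl
  map_mul' _ _ := rfl

theorem prodLex_rigid_and_hyperbolic_of_fst {f : OPAffineAut Λ₁} (g : OPAffineAut Λ₂)
    (h : f.Rigid ∧ f.Hyperbolic) : (prodLex (f, g)).Rigid ∧ (prodLex (f, g)).Hyperbolic := by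
  rw [rigid_and_hyperbolic_iff] at h ⊢
  rcases h with hup | hdown
  · exact Or.inl fun x => Prod.Lex.toLex_lt_toLex.mpr (Or.inl (hup _))
  · exact Or.inr fun x => Prod.Lex.toLex_lt_toLex.mpr (Or.inl (hdown _))

theorem prodLex_rigid_and_hyperbolic_of_snd {g : OPAffineAut Λ₂}
    (h : g.Rigid ∧ g.Hyperbolic) :
    (prodLex ((1 : OPAffineAut Λ₁), g)).Rigid ∧
      (prodLex ((1 : OPAffineAut Λ₁), g)).Hyperbolic := by
  rw [rigid_and_hyperbolic_iff] at h ⊢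
  rcases h with hup | hdown
  · exact Or.inl fun x => Prod.Lex.toLex_lt_toLex.mpr (Or.inr ⟨rfl, hup _⟩)
  · exact Or.inr fun x => Prod.Lex.toLex_lt_toLex.mpr (Or.inr ⟨rfl, hdown _⟩)

end OPAffineAut

section AffineAction

variable {G Λ : Type*} [Group G] [LinearOrderedAddCommGroup Λ]

theorem hasEssentiallyFreeAffineAction_quotient (N : Subgroup G) [N.Normal]
    (ρ : G →* OPAffineAut Λ) (hN : N ≤ ρ.ker) (hρ : ∀ g ∉ N, (ρ g).Rigid ∧ (ρ g).Hyperbolic) :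
    HasEssentiallyFreeAffineAction (G ⧸ N) Λ := by
  refine ⟨QuotientGroup.lift N ρ hN, fun g hg => ?_⟩
  induction g using QuotientGroup.induction_on with
  | H g => exact hρ g fun hgN => hg ((QuotientGroup.eq_one_iff g).mpr hgN)

variable {ρ : G →* OPAffineAut Λ}

theorem AffineActionEssentiallyFree.affineActionFree (h : AffineActionEssentiallyFree ρ) :
    AffineActionFree ρ :=
  fun g hg => (h g hg).2

theorem AffineActionFree.orbit_injective (h : AffineActionFree ρ) (x : Λ) :
    Function.Injective fun g => ρ g x := by
  intro g g' hgg'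
  by_contra hne
  refine h (g'⁻¹ * g) (by rwa [ne_eq, inv_mul_eq_one, eq_comm]) x ?_
  simp only at hgg'
  rw [map_mul, OPAffineAut.mul_apply, hgg', ← OPAffineAut.mul_apply, ← map_mul, inv_mul_cancel,
    map_one, OPAffineAut.one_apply]

abbrev AffineActionFree.linearOrder (h : AffineActionFree ρ) : LinearOrder G :=
  LinearOrder.lift' (fun g => ρ g 0) (h.orbit_injective 0)

theorem AffineActionFree.mulLeftStrictMono (h : AffineActionFree ρ) :
    letI := h.linearOrder
    MulLeftStrictMono G := by
  let := h.linearOrder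
  refine ⟨fun c a b (hab : ρ a 0 < ρ b 0) => ?_⟩
  change ρ (c * a) 0 < ρ (c * b) 0
  rw [map_mul, map_mul]
  exact (ρ c).strictMono' hab

end AffineAction

theorem Finsupp.toLex_domCongr_strictMono {I J N : Type*} [LinearOrder I] [LinearOrder J]
    [AddCommMonoid N] [LinearOrder N] {e : I ≃ J} (he : StrictMono e) :
    StrictMono fun v : Lex (I →₀ N) => toLex (Finsupp.domCongr e (ofLex v)) := by
  intro v w hvw
  obtain ⟨i, hlow, hi⟩ := Finsupp.Lex.lt_iff.mp hvw
  refine Finsupp.Lex.lt_iff.mpr ⟨e i, fun j hj => ?_, ?_⟩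
  · simpa using hlow (e.symm j) (by rwa [← he.lt_iff_lt, Equiv.apply_symm_apply])
  · simpa using hi

/-- `ℤ[Q]^α`, the free `ℤ[Q]`-module on `α`, realised as `ℤ[Q × α]` with the lexicographic
order. -/
abbrev LexFreeModule (Q α : Type*) := Lex (Lex (Q × α) →₀ ℤ)

section LeftRegular

variable {Q α : Type*} [Group Q]

def mulLeftLex (q : Q) : Lex (Q × α) ≃ Lex (Q × α) :=
  ofLex.trans (((Equiv.mulLeft q).prodCongr (Equiv.refl α)).trans toLex)

@[simp] theorem mulLeftLex_apply (q p : Q) (i : α) :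
    mulLeftLex q (toLex (p, i)) = toLex (q * p, i) := rfl

theorem mulLeftLex_one : mulLeftLex (α := α) (1 : Q) = Equiv.refl _ :=
  Equiv.ext fun _ => congrArg toLex (Prod.ext (one_mul _) rfl)

theorem mulLeftLex_mul (q p : Q) :
    mulLeftLex (α := α) (q * p) = (mulLeftLex p).trans (mulLeftLex q) :=
  Equiv.ext fun _ => congrArg toLex (Prod.ext (mul_assoc _ _ _) rfl)

theorem mulLeftLex_strictMono [LinearOrder Q] [MulLeftStrictMono Q] [Preorder α] (q : Q) :
    StrictMono (mulLeftLex (α := α) q) := by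
  intro x y hxy
  rcases Prod.Lex.toLex_lt_toLex.mp hxy with h | ⟨h, h'⟩
  · exact Prod.Lex.toLex_lt_toLex.mpr (Or.inl (mul_lt_mul_right h q))
  · exact Prod.Lex.toLex_lt_toLex.mpr (Or.inr ⟨congrArg (q * ·) h, h'⟩)

noncomputable def lexShift (q : Q) : LexFreeModule Q α ≃+ LexFreeModule Q α :=
  (toLexAddEquiv _).symm.trans ((Finsupp.domCongr (mulLeftLex q)).trans (toLexAddEquiv _))

@[simp] theorem lexShift_single (q p : Q) (i : α) (n : ℤ) :
    lexShift q (toLex (Finsupp.single (toLex (p, i)) n)) =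
      toLex (Finsupp.single (toLex (q * p, i)) n) := by
  simp [lexShift]

theorem lexShift_one (v : LexFreeModule Q α) : lexShift 1 v = v := by
  simp [lexShift, mulLeftLex_one]

theorem lexShift_mul (q p : Q) (v : LexFreeModule Q α) :
    lexShift (q * p) v = lexShift q (lexShift p v) := by
  simp [lexShift, mulLeftLex_mul, ← Finsupp.domCongr_trans]

theorem lexShift_strictMono [LinearOrder Q] [MulLeftStrictMono Q] [LinearOrder α] (q : Q) :
    StrictMono (lexShift (Q := Q) (α := α) q) :=
  Finsupp.toLex_domCongr_strictMono (mulLeftLex_strictMono q)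

noncomputable def lexShiftPerm : Q →* Equiv.Perm (LexFreeModule Q α) where
  toFun q := (lexShift q).toEquiv
  map_one' := Equiv.ext lexShift_one
  map_mul' q p := Equiv.ext (lexShift_mul q p)

@[simp] theorem lexShiftPerm_apply (q : Q) (v : LexFreeModule Q α) :
    lexShiftPerm q v = lexShift q v := rfl

end LeftRegular

section Magnus

variable {α : Type*} (R : Subgroup (FreeGroup α)) [R.Normal]

noncomputable def schreierElt (q : FreeGroup α ⧸ R) (w : FreeGroup α) : R :=
  ⟨q.out * w * (q * w).out⁻¹, (QuotientGroup.eq_one_iff _).mp (by simp)⟩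

theorem schreierElt_one (q : FreeGroup α ⧸ R) : schreierElt R q 1 = 1 :=
  Subtype.ext (by simp [schreierElt])

theorem schreierElt_mul (q : FreeGroup α ⧸ R) (u v : FreeGroup α) :
    schreierElt R q (u * v) = schreierElt R q u * schreierElt R (q * u) v :=
  Subtype.ext (by simp [schreierElt, mul_assoc])

noncomputable def schreierRetraction :
    LexFreeModule (FreeGroup α ⧸ R) α →+ Additive (Abelianization R) :=
  Finsupp.liftAddHom fun j => zmultiplesHom _ (Additive.ofMul
    (Abelianization.of (schreierElt R (ofLex j).1 (FreeGroup.of (ofLex j).2))))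

theorem schreierRetraction_single (q : FreeGroup α ⧸ R) (i : α) :
    schreierRetraction R (toLex (Finsupp.single (toLex (q, i)) 1)) =
      Additive.ofMul (Abelianization.of (schreierElt R q (FreeGroup.of i))) := by
  change Finsupp.liftAddHom _ (Finsupp.single _ _) = _
  simp

variable [LinearOrder α] [LinearOrder (FreeGroup α ⧸ R)] [MulLeftStrictMono (FreeGroup α ⧸ R)]

/-- The Magnus embedding of `F ⧸ ⁅R, R⁆` into the affine group of `ℤ[Q]^α`; the translation part
of `w` is the vector of Fox derivatives of `w`. -/
noncomputable def magnusAction :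
    FreeGroup α →* OPAffineAut (LexFreeModule (FreeGroup α ⧸ R) α) :=
  FreeGroup.lift fun i => OPAffineAut.ofDilation (lexShift (FreeGroup.of i : FreeGroup α ⧸ R))
    (lexShift_strictMono _) (toLex (Finsupp.single (toLex (1, i)) 1))

theorem magnusAction_dilation_apply (w : FreeGroup α) (v : LexFreeModule (FreeGroup α ⧸ R) α) :
    (magnusAction R w).dilation v = lexShift (w : FreeGroup α ⧸ R) v := by
  have h : OPAffineAut.dilationPerm.comp (magnusAction R) =
      lexShiftPerm.comp (QuotientGroup.mk' R) :=
    FreeGroup.ext_hom _ _ fun i => Equiv.ext fun v => by simp [magnusAction]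
  simpa using Equiv.congr_fun (DFunLike.congr_fun h w) v

theorem magnusAction_apply (w : FreeGroup α) (v : LexFreeModule (FreeGroup α ⧸ R) α) :
    magnusAction R w v = lexShift (w : FreeGroup α ⧸ R) v + magnusAction R w 0 := by
  rw [OPAffineAut.apply_eq_dilation_add, magnusAction_dilation_apply]

theorem magnusAction_apply_of_mem {w : FreeGroup α} (hw : w ∈ R)
    (v : LexFreeModule (FreeGroup α ⧸ R) α) :
    magnusAction R w v = v + magnusAction R w 0 := by
  rw [magnusAction_apply, (QuotientGroup.eq_one_iff w).mpr hw, lexShift_one]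

theorem magnusAction_mul_apply_zero (u v : FreeGroup α) :
    magnusAction R (u * v) 0 =
      lexShift (u : FreeGroup α ⧸ R) (magnusAction R v 0) + magnusAction R u 0 := by
  rw [map_mul, OPAffineAut.mul_apply, magnusAction_apply]

theorem commutator_le_ker_magnusAction : ⁅R, R⁆ ≤ (magnusAction R).ker := by
  rw [Subgroup.commutator_le]
  intro a ha b hb
  have hcomm : Commute (magnusAction R a) (magnusAction R b) := OPAffineAut.ext' fun v => by
    rw [OPAffineAut.mul_apply, OPAffineAut.mul_apply,
      magnusAction_apply_of_mem R ha (magnusAction R b v), magnusAction_apply_of_mem R hb v,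
      magnusAction_apply_of_mem R hb (magnusAction R a v),
      magnusAction_apply_of_mem R ha v, add_right_comm]
  rw [MonoidHom.mem_ker, map_commutatorElement, commutatorElement_eq_one_iff_commute]
  exact hcomm

theorem schreierRetraction_lexShift_magnusAction (w : FreeGroup α) (q : FreeGroup α ⧸ R) :
    schreierRetraction R (lexShift q (magnusAction R w 0)) =
      Additive.ofMul (Abelianization.of (schreierElt R q w)) := by
  induction w using FreeGroup.induction_on generalizing q with
  | C1 => simp [schreierElt_one]
  | of i => simp [magnusAction, schreierRetraction_single]
  | inv_of i ih =>
    have h := magnusAction_mul_apply_zero R (FreeGroup.of i)⁻¹ (FreeGroup.of i)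
    have h' := schreierElt_mul R q (FreeGroup.of i)⁻¹ (FreeGroup.of i)
    rw [inv_mul_cancel, map_one, OPAffineAut.one_apply, eq_comm, add_eq_zero_iff_eq_neg'] at h
    rw [inv_mul_cancel, schreierElt_one, eq_comm, mul_eq_one_iff_eq_inv] at h'
    rw [h, map_neg, ← lexShift_mul, map_neg, ih, h', map_inv, ofMul_inv]
  | mul u v hu hv =>
    rw [magnusAction_mul_apply_zero, map_add, ← lexShift_mul, map_add, hu, hv, schreierElt_mul,
      map_mul, ofMul_mul, add_comm]

theorem mem_commutator_of_magnusAction_apply_zero {w : FreeGroup α} (hw : w ∈ R)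
    (h : magnusAction R w 0 = 0) : w ∈ ⁅R, R⁆ := by
  have key := schreierRetraction_lexShift_magnusAction R w 1
  rw [h, map_zero, map_zero, eq_comm, ofMul_eq_zero, ← MonoidHom.mem_ker,
    Abelianization.ker_of] at key
  have hconj : (schreierElt R 1 w : FreeGroup α) ∈ ⁅R, R⁆ := by
    rw [← Subgroup.map_subtype_commutator]
    exact ⟨_, key, rfl⟩
  set s := (1 : FreeGroup α ⧸ R).out
  have hs : (schreierElt R 1 w : FreeGroup α) = s * w * s⁻¹ := by
    simp [schreierElt, s, (QuotientGroup.eq_one_iff w).mpr hw]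
  simpa [hs, mul_assoc] using Subgroup.Normal.conj_mem inferInstance _ hconj s⁻¹

end Magnus

section LiftedAction

variable {α : Type*} [LinearOrder α] (R : Subgroup (FreeGroup α)) [R.Normal]
  [LinearOrder (FreeGroup α ⧸ R)] [MulLeftStrictMono (FreeGroup α ⧸ R)]
  {Λ : Type*} [LinearOrderedAddCommGroup Λ] (ρ : FreeGroup α ⧸ R →* OPAffineAut Λ)

noncomputable def liftedAction :
    FreeGroup α →* OPAffineAut (Lex (Λ × LexFreeModule (FreeGroup α ⧸ R) α)) :=
  OPAffineAut.prodLex.comp ((ρ.comp (QuotientGroup.mk' R)).prod (magnusAction R))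

theorem commutator_le_ker_liftedAction : ⁅R, R⁆ ≤ (liftedAction R ρ).ker := by
  intro w hw
  have hwR : (w : FreeGroup α ⧸ R) = 1 :=
    (QuotientGroup.eq_one_iff w).mpr (Subgroup.commutator_le_left R R hw)
  have hτ : magnusAction R w = 1 := commutator_le_ker_magnusAction R hw
  simp only [MonoidHom.mem_ker, liftedAction, MonoidHom.comp_apply, MonoidHom.prod_apply,
    QuotientGroup.mk'_apply, hwR, hτ, map_one, Prod.mk_one_one]

theorem liftedAction_rigid_and_hyperbolic (hρ : AffineActionEssentiallyFree ρ) {w : FreeGroup α}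
    (hw : w ∉ ⁅R, R⁆) : (liftedAction R ρ w).Rigid ∧ (liftedAction R ρ w).Hyperbolic := by
  by_cases hwR : w ∈ R
  · have hw1 : (w : FreeGroup α ⧸ R) = 1 := (QuotientGroup.eq_one_iff w).mpr hwR
    have hτ := OPAffineAut.rigid_and_hyperbolic_of_dilation_eq_id
      (fun v => by rw [magnusAction_dilation_apply, hw1, lexShift_one])
      (mt (mem_commutator_of_magnusAction_apply_zero R hwR) hw)
    simpa [liftedAction, hw1] using OPAffineAut.prodLex_rigid_and_hyperbolic_of_snd hτ
  · have hw1 : (w : FreeGroup α ⧸ R) ≠ 1 := mt (QuotientGroup.eq_one_iff w).mp hwR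
    exact OPAffineAut.prodLex_rigid_and_hyperbolic_of_fst _ (hρ _ hw1)

end LiftedAction

theorem HasEssentiallyFreeAffineAction.quotient_commutator {α Λ : Type u} [LinearOrder α]
    [LinearOrderedAddCommGroup Λ] {R : Subgroup (FreeGroup α)} [R.Normal]
    (h : HasEssentiallyFreeAffineAction (FreeGroup α ⧸ R) Λ) :
    ∃ (Λ' : Type u) (_ : LinearOrderedAddCommGroup Λ'),
      HasEssentiallyFreeAffineAction (FreeGroup α ⧸ ⁅R, R⁆) Λ' := by
  obtain ⟨ρ, hρ⟩ := h
  let := hρ.affineActionFree.linearOrder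
  have := hρ.affineActionFree.mulLeftStrictMono
  exact ⟨_, inferInstance, hasEssentiallyFreeAffineAction_quotient _ (liftedAction R ρ)
    (commutator_le_ker_liftedAction R ρ) fun w hw => liftedAction_rigid_and_hyperbolic R ρ hρ hw⟩

/-- Every free soluble group (the quotient of a free group by a term of its
derived series) admits an essentially free orientation-preserving affine action on some
linearly ordered abelian group. -/
theorem freeSoluble_hasEssentiallyFreeAffineAction (α : Type u) (d : ℕ) :
    ∃ (Λ : Type u) (instΛ : LinearOrderedAddCommGroup Λ),
      @HasEssentiallyFreeAffineAction (FreeGroup α ⧸ derivedSeries (FreeGroup α) d) _ Λ instΛ := by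
  let : LinearOrder α := IsWellOrder.linearOrder WellOrderingRel
  induction d with
  | zero =>
    exact ⟨PUnit, inferInstance, hasEssentiallyFreeAffineAction_quotient _ 1
      (fun _ _ => rfl) fun w hw => absurd (Subgroup.mem_top w) hw⟩
  | succ d ih =>
    obtain ⟨Λ, _, h⟩ := ih
    exact h.quotient_commutator
end
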